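/- arXiv:1411.7563 — 4 statements merged into one kernel-verified Lean document; each statement's English description precedes it below -/
import Mathlib

section
/- Let X and Y be topological spaces, let F be a closed correspondence from X to Y, and let f : X → Y be a continuous selector of F. If F is homologically consistent, then for every n ≥ 0 and every homology class a ∈ H_n(F) one has H_n(f)(H_n(p_F)(a)) = H_n(q_F)(a); moreover H_n(p_F) : H_n(F) → H_n(X) is surjective, so the homomorphism H_n(f) : H_n(X) → H_n(Y) induced by f is completely determined by the two projections of F. -/
open CategoryTheory AlgebraicTopology

/-- Degree-`n` singular homology with coefficients in a commutative ring `R`,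
as a functor from topological spaces to `R`-modules: the homology of the
alternating face map complex of the free simplicial `R`-module on the singular
simplicial set. -/
noncomputable def Hn (R : Type) [CommRing R] (n : ℕ) :
    TopCat.{0} ⥤ ModuleCat.{0} R :=
  TopCat.toSSet ⋙ ((SimplicialObject.whiskering _ _).obj (ModuleCat.free R)) ⋙
    alternatingFaceMapComplex (ModuleCat R) ⋙
    HomologicalComplex.homologyFunctor (ModuleCat R) (ComplexShape.down ℕ) n

/-- A correspondence `F ⊆ X × Y` with the subspace topology, as an object of `TopCat`. -/
def corr {X Y : Type} [TopologicalSpace X] [TopologicalSpace Y]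
    (F : Set (X × Y)) : TopCat.{0} := TopCat.of F

/-- The first-coordinate projection `p_F : F → X` of a correspondence `F ⊆ X × Y`. -/
def projX {X Y : Type} [TopologicalSpace X] [TopologicalSpace Y]
    (F : Set (X × Y)) : corr F ⟶ TopCat.of X :=
  TopCat.ofHom ⟨fun z => z.1.1, continuous_fst.comp continuous_subtype_val⟩

/-- The second-coordinate projection `q_F : F → Y` of a correspondence `F ⊆ X × Y`. -/
def projY {X Y : Type} [TopologicalSpace X] [TopologicalSpace Y]
    (F : Set (X × Y)) : corr F ⟶ TopCat.of Y :=
  TopCat.ofHom ⟨fun z => z.1.2, continuous_snd.comp continuous_subtype_val⟩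

/-!
The graph `x ↦ (x, f x)` of the selector is a continuous section of `p_F` whose composite with
`q_F` is `f`. Hence `H_n(p_F)` has a right inverse and is surjective, and for any class `a`, the
difference between `a` and its image under (section ∘ `H_n(p_F)`) lies in `ker H_n(p_F)`, so
`H_n(q_F)` kills it by consistency.
-/

theorem LinearMap.apply_section_apply_eq_of_ker_le {R M N P : Type*} [Ring R]
    [AddCommGroup M] [AddCommGroup N] [AddCommGroup P] [Module R M] [Module R N] [Module R P]
    {p : M →ₗ[R] N} {q : M →ₗ[R] P} {s : N →ₗ[R] M} (hps : p ∘ₗ s = LinearMap.id)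
    (hker : LinearMap.ker p ≤ LinearMap.ker q) (a : M) : q (s (p a)) = q a := by
  have hmem : s (p a) - a ∈ LinearMap.ker p := by
    rw [LinearMap.mem_ker, map_sub, ← LinearMap.comp_apply, hps, LinearMap.id_apply, sub_self]
  simpa only [LinearMap.mem_ker, map_sub, sub_eq_zero] using hker hmem

section Graph

variable {X Y : Type} [TopologicalSpace X] [TopologicalSpace Y]

def graphSection (F : Set (X × Y)) (f : X → Y) (hf : Continuous f)
    (hsel : ∀ x : X, (x, f x) ∈ F) : TopCat.of X ⟶ corr F :=
  TopCat.ofHom ⟨fun x => ⟨(x, f x), hsel x⟩, by fun_prop⟩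

theorem graphSection_comp_projX (F : Set (X × Y)) (f : X → Y) (hf : Continuous f)
    (hsel : ∀ x : X, (x, f x) ∈ F) : graphSection F f hf hsel ≫ projX F = 𝟙 _ :=
  rfl

theorem graphSection_comp_projY (F : Set (X × Y)) (f : X → Y) (hf : Continuous f)
    (hsel : ∀ x : X, (x, f x) ∈ F) :
    graphSection F f hf hsel ≫ projY F = TopCat.ofHom ⟨f, hf⟩ :=
  rfl

end Graph

theorem induced_map_from_consistent_correspondence_general
    {X Y : Type} [TopologicalSpace X] [TopologicalSpace Y]
    (R : Type) [CommRing R]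
    (F : Set (X × Y))
    (f : X → Y) (hf : Continuous f) (hsel : ∀ x : X, (x, f x) ∈ F)
    (hFconsistent : ∀ n : ℕ,
      LinearMap.ker ((Hn R n).map (projX F)).hom ≤ LinearMap.ker ((Hn R n).map (projY F)).hom) :
    ∀ n : ℕ,
      (∀ a : (Hn R n).obj (corr F),
        (Hn R n).map (TopCat.ofHom ⟨f, hf⟩ : TopCat.of X ⟶ TopCat.of Y) ((Hn R n).map (projX F) a) =
          (Hn R n).map (projY F) a) ∧
      Function.Surjective ((Hn R n).map (projX F)) := by
  intro n
  have hsec : ((Hn R n).map (projX F)).hom ∘ₗ ((Hn R n).map (graphSection F f hf hsel)).hom =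
      LinearMap.id := by
    rw [← ModuleCat.hom_comp, ← Functor.map_comp, graphSection_comp_projX,
      CategoryTheory.Functor.map_id, ModuleCat.hom_id]
  refine ⟨fun a => ?_, Function.LeftInverse.surjective (LinearMap.congr_fun hsec)⟩
  rw [← graphSection_comp_projY F f hf hsel, Functor.map_comp]
  exact LinearMap.apply_section_apply_eq_of_ker_le hsec (hFconsistent n) a

/-- **Theorem `thm:homF` of the paper**: let `f : X → Y` be a continuous selector of a
closed correspondence `F ⊆ X × Y`.  If `F` is homologically consistent
(`ker H_n(p_F) ⊆ ker H_n(q_F)` for all `n`), then for every `n` and every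
`a ∈ H_n(F)` one has `H_n(f)(H_n(p_F)(a)) = H_n(q_F)(a)`, and `H_n(p_F)` is
surjective; hence `H_n(f)` is completely determined by the two projections of `F`. -/
theorem induced_map_from_consistent_correspondence
    {X Y : Type} [TopologicalSpace X] [TopologicalSpace Y]
    (R : Type) [CommRing R]
    (F : Set (X × Y)) (hFclosed : IsClosed F)
    (f : X → Y) (hf : Continuous f) (hsel : ∀ x : X, (x, f x) ∈ F)
    (hFconsistent : ∀ n : ℕ,
      LinearMap.ker ((Hn R n).map (projX F)).hom ≤ LinearMap.ker ((Hn R n).map (projY F)).hom) :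
    ∀ n : ℕ,
      (∀ a : (Hn R n).obj (corr F),
        (Hn R n).map (TopCat.ofHom ⟨f, hf⟩ : TopCat.of X ⟶ TopCat.of Y) ((Hn R n).map (projX F) a) =
          (Hn R n).map (projY F) a) ∧
      Function.Surjective ((Hn R n).map (projX F)) :=
  induced_map_from_consistent_correspondence_general R F f hf hsel hFconsistent
end

section
/- Let X and Y be topological spaces, let F ⊆ G be closed correspondences from X to Y, let G be homologically consistent, and let f : X → Y be a continuous selector of G. If F is homologically complete, then for every n ≥ 0: H_n(p_F) : H_n(F) → H_n(X) is surjective and for every a ∈ H_n(F) one has H_n(f)(H_n(p_F)(a)) = H_n(q_F)(a); consequently the homomorphism H_n(f) induced by f is completely determined by the projections of F alone. -/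
open CategoryTheory AlgebraicTopology

/- The graph `x ↦ (x, f x)` of the selector is a section of `p_G`, so for
`a ∈ H_n(F)` the classes `H_n(graph)(H_n(p_F) a)` and `H_n(F ⊆ G) a` have the same image under
`H_n(p_G)`. Consistency of `G` then forces them to have the same image under `H_n(q_G)`,
which reads `H_n(f)(H_n(p_F) a) = H_n(q_F) a`. -/

theorem LinearMap.eq_of_ker_le_ker_of_eq {R M N P : Type*} [Ring R] [AddCommGroup M] [Module R M]
    [AddCommGroup N] [Module R N] [AddCommGroup P] [Module R P] {φ : M →ₗ[R] N} {ψ : M →ₗ[R] P}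
    (h : LinearMap.ker φ ≤ LinearMap.ker ψ) {u v : M} (huv : φ u = φ v) : ψ u = ψ v := by
  have : u - v ∈ LinearMap.ker ψ := h (by rw [LinearMap.mem_ker, map_sub, huv, sub_self])
  rwa [LinearMap.mem_ker, map_sub, sub_eq_zero] at this

section Correspondence

variable {X Y : Type} [TopologicalSpace X] [TopologicalSpace Y]

def corrInclusion {F G : Set (X × Y)} (hFG : F ⊆ G) : corr F ⟶ corr G :=
  TopCat.ofHom ⟨Set.inclusion hFG, continuous_inclusion hFG⟩

def graphMap (G : Set (X × Y)) {f : X → Y} (hf : Continuous f) (hsel : ∀ x, (x, f x) ∈ G) :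
    TopCat.of X ⟶ corr G :=
  TopCat.ofHom ⟨fun x => ⟨(x, f x), hsel x⟩, (continuous_id.prodMk hf).subtype_mk _⟩

@[simp]
theorem corrInclusion_comp_projX {F G : Set (X × Y)} (hFG : F ⊆ G) :
    corrInclusion hFG ≫ projX G = projX F :=
  rfl

@[simp]
theorem corrInclusion_comp_projY {F G : Set (X × Y)} (hFG : F ⊆ G) :
    corrInclusion hFG ≫ projY G = projY F :=
  rfl

@[simp]
theorem graphMap_comp_projX (G : Set (X × Y)) {f : X → Y} (hf : Continuous f)
    (hsel : ∀ x, (x, f x) ∈ G) : graphMap G hf hsel ≫ projX G = 𝟙 _ :=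
  rfl

@[simp]
theorem graphMap_comp_projY (G : Set (X × Y)) {f : X → Y} (hf : Continuous f)
    (hsel : ∀ x, (x, f x) ∈ G) : graphMap G hf hsel ≫ projY G = TopCat.ofHom ⟨f, hf⟩ :=
  rfl

theorem map_selector_map_projX_eq_map_projY {R : Type*} [Ring R] (H : TopCat.{0} ⥤ ModuleCat R)
    {F G : Set (X × Y)} (hFG : F ⊆ G)
    (hGconsistent : LinearMap.ker (H.map (projX G)).hom ≤ LinearMap.ker (H.map (projY G)).hom)
    {f : X → Y} (hf : Continuous f) (hsel : ∀ x, (x, f x) ∈ G) (a : H.obj (corr F)) :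
    H.map (TopCat.ofHom ⟨f, hf⟩) (H.map (projX F) a) = H.map (projY F) a := by
  have hX : H.map (projX G) (H.map (graphMap G hf hsel) (H.map (projX F) a)) =
      H.map (projX G) (H.map (corrInclusion hFG) a) := by
    simp only [← Functor.map_comp_apply, Category.assoc, graphMap_comp_projX,
      corrInclusion_comp_projX, Category.comp_id]
  have hY := LinearMap.eq_of_ker_le_ker_of_eq hGconsistent hX
  simpa only [← Functor.map_comp_apply, Category.assoc, graphMap_comp_projY,
    corrInclusion_comp_projY] using hY

end Correspondence

theorem induced_map_from_complete_subcorrespondence_general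
    {X Y : Type} [TopologicalSpace X] [TopologicalSpace Y]
    (R : Type) [CommRing R]
    (F G : Set (X × Y)) (hFG : F ⊆ G)
    (hGconsistent : ∀ n : ℕ,
      LinearMap.ker ((Hn R n).map (projX G)).hom ≤ LinearMap.ker ((Hn R n).map (projY G)).hom)
    (f : X → Y) (hf : Continuous f) (hsel : ∀ x : X, (x, f x) ∈ G)
    (hFcomplete : ∀ n : ℕ, Function.Surjective ((Hn R n).map (projX F))) :
    ∀ n : ℕ,
      Function.Surjective ((Hn R n).map (projX F)) ∧
      ∀ a : (Hn R n).obj (corr F),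
        (Hn R n).map (TopCat.ofHom ⟨f, hf⟩ : TopCat.of X ⟶ TopCat.of Y) ((Hn R n).map (projX F) a) =
          (Hn R n).map (projY F) a :=
  fun n => ⟨hFcomplete n, map_selector_map_projX_eq_map_projY (Hn R n) hFG (hGconsistent n) hf hsel⟩

/-- **Theorem `thm:combinedtheorem` of the paper**: let `F ⊆ G` be closed
correspondences from `X` to `Y`, let `G` be homologically consistent, and let
`f : X → Y` be a continuous selector of `G`.  If `F` is homologically complete, then
for every `n` the map `H_n(p_F)` is surjective and
`H_n(f)(H_n(p_F)(a)) = H_n(q_F)(a)` for every `a ∈ H_n(F)`; hence `H_n(f)` is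
completely determined by the projections of `F` alone. -/
theorem induced_map_from_complete_subcorrespondence
    {X Y : Type} [TopologicalSpace X] [TopologicalSpace Y]
    (R : Type) [CommRing R]
    (F G : Set (X × Y)) (hFG : F ⊆ G)
    (hFclosed : IsClosed F) (hGclosed : IsClosed G)
    (hGconsistent : ∀ n : ℕ,
      LinearMap.ker ((Hn R n).map (projX G)).hom ≤ LinearMap.ker ((Hn R n).map (projY G)).hom)
    (f : X → Y) (hf : Continuous f) (hsel : ∀ x : X, (x, f x) ∈ G)
    (hFcomplete : ∀ n : ℕ, Function.Surjective ((Hn R n).map (projX F))) :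
    ∀ n : ℕ,
      Function.Surjective ((Hn R n).map (projX F)) ∧
      ∀ a : (Hn R n).obj (corr F),
        (Hn R n).map (TopCat.ofHom ⟨f, hf⟩ : TopCat.of X ⟶ TopCat.of Y) ((Hn R n).map (projX F) a) =
          (Hn R n).map (projY F) a :=
  induced_map_from_complete_subcorrespondence_general R F G hFG hGconsistent f hf hsel hFcomplete
end

section
/- Let X and Y be compact metric spaces and let 𝒰 be a finite closed cover of Y. Let F be an upper semicontinuous set-valued map from X to Y with nonempty values that is inscribed into 𝒰. Then there exists an upper semicontinuous set-valued map G from X to Y such that F(x) ⊆ G(x) for every x ∈ X, and for every x ∈ X there is a nonempty subfamily 𝒱 ⊆ 𝒰 with G(x) = ⋂ 𝒱; in particular each value G(x) is a nonempty closed intersection of members of 𝒰 (hence, if 𝒰 is a good closed cover, each G(x) is acyclic). -/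
/-- A set-valued map `F` from `X` to `Y` is upper semicontinuous if for every `x` and
every open `V ⊇ F x` there is an open neighborhood `U` of `x` with `F x' ⊆ V`
for all `x' ∈ U`. -/
def IsUSC {X Y : Type*} [TopologicalSpace X] [TopologicalSpace Y]
    (F : X → Set Y) : Prop :=
  ∀ x : X, ∀ V : Set Y, IsOpen V → F x ⊆ V →
    ∃ U : Set X, IsOpen U ∧ x ∈ U ∧ ∀ x' ∈ U, F x' ⊆ V

/-- **Existence of an enlargement with values that are intersections of cover elements**
(Theorem `thm:extAcycl` of the paper): if `X` and `Y` are compact metric spaces,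
`𝒰` is a finite closed cover of `Y`, and `F` is an upper semicontinuous set-valued map
from `X` to `Y` with nonempty values inscribed into `𝒰`, then there is an upper
semicontinuous set-valued map `G` enlarging `F` each of whose values is a nonempty
closed intersection of a nonempty subfamily of `𝒰` (hence acyclic if `𝒰` is a good
closed cover). -/
theorem exists_usc_enlargement_by_cover
    {X Y : Type*} [MetricSpace X] [CompactSpace X] [MetricSpace Y] [CompactSpace Y]
    (𝒰 : Set (Set Y)) (h𝒰fin : 𝒰.Finite)
    (h𝒰closed : ∀ U ∈ 𝒰, IsClosed U)
    (h𝒰cover : ⋃ U ∈ 𝒰, interior U = Set.univ)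
    (F : X → Set Y) (hFne : ∀ x : X, (F x).Nonempty)
    (hFusc : IsUSC F)
    (hFinscribed : ∀ x : X, ∃ U ∈ 𝒰, F x ⊆ interior U) :
    ∃ G : X → Set Y, IsUSC G ∧
      ∀ x : X, F x ⊆ G x ∧ (G x).Nonempty ∧ IsClosed (G x) ∧
        ∃ 𝒱 ⊆ 𝒰, 𝒱.Nonempty ∧ G x = ⋂₀ 𝒱 := by
  -- family of cover elements whose interior contains `F x`
  set 𝒱 : X → Set (Set Y) := fun x => {U | U ∈ 𝒰 ∧ F x ⊆ interior U} with h𝒱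
  refine ⟨fun x => ⋂₀ 𝒱 x, ?_, ?_⟩
  · -- upper semicontinuity
    intro x V hV hGV
    -- open set: intersection of interiors over 𝒱 x
    have hsub : 𝒱 x ⊆ 𝒰 := fun U hU => hU.1
    have hfin : (𝒱 x).Finite := h𝒰fin.subset hsub
    set W : Set Y := ⋂ U ∈ 𝒱 x, interior U with hW
    have hWopen : IsOpen W :=
      hfin.isOpen_biInter (fun U _ => isOpen_interior)
    have hFW : F x ⊆ W := by
      intro y hy
      exact Set.mem_biInter fun U hU => hU.2 hy
    obtain ⟨O, hOopen, hxO, hO⟩ := hFusc x W hWopen hFW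
    refine ⟨O, hOopen, hxO, fun x' hx' => ?_⟩
    -- 𝒱 x ⊆ 𝒱 x', hence ⋂₀ 𝒱 x' ⊆ ⋂₀ 𝒱 x ⊆ V
    have hmono : 𝒱 x ⊆ 𝒱 x' := by
      intro U hU
      refine ⟨hU.1, fun y hy => ?_⟩
      exact Set.mem_iInter₂.mp (hO x' hx' hy) U hU
    exact (Set.sInter_subset_sInter hmono).trans hGV
  · intro x
    have hFG : F x ⊆ ⋂₀ 𝒱 x := fun y hy =>
      Set.mem_sInter.mpr fun U hU => interior_subset (hU.2 hy)
    obtain ⟨U, hU𝒰, hUF⟩ := hFinscribed x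
    refine ⟨hFG, (hFne x).mono hFG, ?_, 𝒱 x, fun U hU => hU.1,
      ⟨U, hU𝒰, hUF⟩, rfl⟩
    exact isClosed_sInter fun U hU => h𝒰closed U hU.1
end

section
/- Every second-countable Hausdorff finite-dimensional smooth real manifold M without boundary admits a family 𝒰 of closed subsets of M whose interiors cover M and such that the intersection of any nonempty finite subfamily of 𝒰 is either empty or contractible (hence, in particular, empty or acyclic); that is, M has a good closed cover. -/
/-!
Cover `M` by a locally finite family of closed sets `C i`, each inside the domain of the chart at
`i`. A `C²` diffeomorphism `φ` sends small round balls about `c` onto convex sets: the Hessian of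
`y ↦ ‖φ⁻¹ y - c‖²` is `2 (Dφ⁻¹ᵀ Dφ⁻¹ + ⟪φ⁻¹ y - c, D²φ⁻¹⟫)`, which is positive semidefinite where
`φ⁻¹ y` is close to `c`. Hence every point `q` has a closed coordinate ball `B q` which, for each of
the finitely many `C i` near `q`, either misses `C i` or lies in the chart at `i` with convex image.
If an intersection of such balls contains a point of `C i`, all of them are convex in the chart at
`i`, so the intersection is homeomorphic to a nonempty convex set.
-/

open scoped Manifold RealInnerProductSpace
open Set Metric Filter Topology

theorem OpenPartialHomeomorph.fderiv_apply_fderiv_symm {E F : Type*} [NormedAddCommGroup E]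
    [NormedSpace ℝ E] [NormedAddCommGroup F] [NormedSpace ℝ F] (e : OpenPartialHomeomorph E F)
    {y : F} (hy : y ∈ e.target) (he : DifferentiableAt ℝ e (e.symm y))
    (he' : DifferentiableAt ℝ e.symm y) (v : F) :
    fderiv ℝ e (e.symm y) (fderiv ℝ e.symm y v) = v := by
  have h_inv : e ∘ e.symm =ᶠ[𝓝 y] id := e.eventually_right_inverse hy
  have h := h_inv.fderiv_eq (𝕜 := ℝ)
  rw [fderiv_comp y he he', fderiv_id] at h
  exact congr($h v)

section ConvexImageOfBall

variable {E F : Type*} [NormedAddCommGroup E] [InnerProductSpace ℝ E]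
  [NormedAddCommGroup F] [NormedSpace ℝ F]

theorem convexOn_norm_sq_of_hasDerivAt {s : Set ℝ} (hs : Convex ℝ s) {p p' p'' : ℝ → E}
    (hp : ∀ t ∈ s, HasDerivAt p (p' t) t) (hp' : ∀ t ∈ s, HasDerivAt p' (p'' t) t)
    (h : ∀ t ∈ s, ‖p t‖ * ‖p'' t‖ ≤ ‖p' t‖ ^ 2) :
    ConvexOn ℝ s fun t => ‖p t‖ ^ 2 := by
  refine convexOn_of_hasDerivWithinAt2_nonneg hs
    (fun t ht => ((hp t ht).continuousAt.norm.pow 2).continuousWithinAt)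
    (f' := fun t => 2 * ⟪p t, p' t⟫) (f'' := fun t => 2 * (⟪p t, p'' t⟫ + ⟪p' t, p' t⟫))
    (fun t ht => (hp t (interior_subset ht)).norm_sq.hasDerivWithinAt)
    (fun t ht => (((hp t (interior_subset ht)).inner ℝ
      (hp' t (interior_subset ht))).const_mul 2).hasDerivWithinAt) fun t ht => ?_
  have h_inner : -(‖p t‖ * ‖p'' t‖) ≤ ⟪p t, p'' t⟫ :=
    neg_le_of_abs_le (abs_real_inner_le_norm _ _)
  have := h t (interior_subset ht)
  rw [real_inner_self_eq_norm_sq]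
  linarith

theorem convexOn_norm_sub_sq_of_hasFDerivAt {W : Set F} (hW : Convex ℝ W) {ψ : F → E} {c : E}
    {G : F → F →L[ℝ] E} {H : F → F →L[ℝ] F →L[ℝ] E}
    (hψ : ∀ y ∈ W, HasFDerivAt ψ (G y) y) (hG : ∀ y ∈ W, HasFDerivAt G (H y) y)
    (h : ∀ y ∈ W, ∀ v, ‖ψ y - c‖ * ‖H y v v‖ ≤ ‖G y v‖ ^ 2) :
    ConvexOn ℝ W fun y => ‖ψ y - c‖ ^ 2 := by
  refine ⟨hW, fun x hx y hy a b ha hb hab => ?_⟩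
  set ℓ := AffineMap.lineMap (k := ℝ) x y
  have hℓ : ∀ t, HasDerivAt ℓ (y - x) t := fun t => AffineMap.hasDerivAt_lineMap
  have hline := convexOn_norm_sq_of_hasDerivAt (hW.affine_preimage ℓ)
    (p := fun t => ψ (ℓ t) - c) (p' := fun t => G (ℓ t) (y - x))
    (p'' := fun t => H (ℓ t) (y - x) (y - x))
    (fun t ht => ((hψ _ ht).comp_hasDerivAt t (hℓ t)).sub_const c)
    (fun t ht => by
      simpa using ((hG _ ht).comp_hasDerivAt t (hℓ t)).clm_apply (hasDerivAt_const t (y - x)))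
    (fun t ht => h _ ht _)
  have := hline.2 (x := 0) (y := 1) (by simpa [ℓ] using hx) (by simpa [ℓ] using hy) ha hb hab
  have hb' : ℓ b = a • x + b • y := by
    rw [AffineMap.lineMap_apply_module, ← eq_sub_of_add_eq hab]
  simpa [ℓ, hb'] using this

theorem OpenPartialHomeomorph.exists_ball_convexOn_norm_symm_sub_sq
    (e : OpenPartialHomeomorph E F) (he : ContDiffOn ℝ 2 e e.source)
    (he' : ContDiffOn ℝ 2 e.symm e.target) {c : E} (hc : c ∈ e.source) :
    ∃ δ > 0, ball (e c) δ ⊆ e.target ∧ ConvexOn ℝ (ball (e c) δ) fun y => ‖e.symm y - c‖ ^ 2 := by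
  set G := fderiv ℝ e.symm
  set H := fderiv ℝ G
  have hG : ContDiffOn ℝ 1 G e.target := he'.fderiv_of_isOpen e.open_target (by norm_num)
  have he_diff : ∀ x ∈ e.source, DifferentiableAt ℝ e x := fun x hx =>
    (he.differentiableOn (by norm_num)).differentiableAt (e.open_source.mem_nhds hx)
  have he'_diff : ∀ y ∈ e.target, DifferentiableAt ℝ e.symm y := fun y hy =>
    (he'.differentiableOn (by norm_num)).differentiableAt (e.open_target.mem_nhds hy)
  have hG_diff : ∀ y ∈ e.target, DifferentiableAt ℝ G y := fun y hy =>
    (hG.differentiableOn one_ne_zero).differentiableAt (e.open_target.mem_nhds hy)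
  -- the coefficient of `‖G y v‖ ^ 2` vanishes at `e c`
  have h_bound : ∀ y ∈ e.target, ∀ v, ‖e.symm y - c‖ * ‖H y v v‖ ≤
      (‖e.symm y - c‖ * ‖H y‖ * ‖fderiv ℝ e (e.symm y)‖ ^ 2) * ‖G y v‖ ^ 2 := by
    intro y hy v
    have hv : ‖v‖ ≤ ‖fderiv ℝ e (e.symm y)‖ * ‖G y v‖ := by
      conv_lhs =>
        rw [← e.fderiv_apply_fderiv_symm hy (he_diff _ (e.map_target hy)) (he'_diff y hy) v]
      exact ContinuousLinearMap.le_opNorm _ _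
    calc ‖e.symm y - c‖ * ‖H y v v‖ ≤ ‖e.symm y - c‖ * (‖H y‖ * ‖v‖ * ‖v‖) := by
          gcongr; exact (H y).le_opNorm₂ v v
      _ ≤ ‖e.symm y - c‖ * (‖H y‖ * (‖fderiv ℝ e (e.symm y)‖ * ‖G y v‖) *
          (‖fderiv ℝ e (e.symm y)‖ * ‖G y v‖)) := by gcongr
      _ = _ := by ring
  have h_cont : ContinuousAt (fun y => ‖e.symm y - c‖ * ‖H y‖ * ‖fderiv ℝ e (e.symm y)‖ ^ 2)
      (e c) := by
    have hψ : ContinuousAt e.symm (e c) := e.continuousAt_symm (e.map_source hc)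
    have hH : ContinuousAt H (e c) :=
      (hG.continuousOn_fderiv_of_isOpen e.open_target le_rfl).continuousAt
        (e.open_target.mem_nhds (e.map_source hc))
    have hF : ContinuousAt (fderiv ℝ e) (e.symm (e c)) := by
      rw [e.left_inv hc]
      exact (he.continuousOn_fderiv_of_isOpen e.open_source one_le_two).continuousAt
        (e.open_source.mem_nhds hc)
    -- `by exact` reconciles the operator topology of `hH` with the norm topology
    exact ((hψ.sub continuousAt_const).norm.mul (ContinuousAt.norm (f := H) (by exact hH))).mul
      ((hF.comp hψ).norm.pow 2)
  have h_small : ∀ᶠ y in 𝓝 (e c), y ∈ e.target ∧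
      ‖e.symm y - c‖ * ‖H y‖ * ‖fderiv ℝ e (e.symm y)‖ ^ 2 ≤ 1 := by
    refine Filter.Eventually.and (e.open_target.mem_nhds (e.map_source hc))
      ((h_cont.eventually_lt continuousAt_const ?_).mono fun _ => le_of_lt)
    simp [e.left_inv hc]
  obtain ⟨δ, hδ, hball⟩ := Metric.eventually_nhds_iff_ball.1 h_small
  refine ⟨δ, hδ, fun y hy => (hball y hy).1, convexOn_norm_sub_sq_of_hasFDerivAt (convex_ball _ _)
    (G := G) (H := H) (fun y hy => (he'_diff y (hball y hy).1).hasFDerivAt)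
    (fun y hy => (hG_diff y (hball y hy).1).hasFDerivAt) fun y hy v => ?_⟩
  exact (h_bound y (hball y hy).1 v).trans (mul_le_of_le_one_left (sq_nonneg _) (hball y hy).2)

theorem OpenPartialHomeomorph.eventually_convex_image_closedBall (e : OpenPartialHomeomorph E F)
    (he : ContDiffOn ℝ 2 e e.source) (he' : ContDiffOn ℝ 2 e.symm e.target)
    {c : E} (hc : c ∈ e.source) :
    ∀ᶠ r in 𝓝[>] (0 : ℝ), closedBall c r ⊆ e.source ∧ Convex ℝ (e '' closedBall c r) := by
  obtain ⟨δ, hδ, h_target, h_convex⟩ := e.exists_ball_convexOn_norm_symm_sub_sq he he' hc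
  have h_nhds : e.source ∩ e ⁻¹' ball (e c) δ ∈ 𝓝 c :=
    (e.isOpen_inter_preimage isOpen_ball).mem_nhds ⟨hc, mem_ball_self hδ⟩
  filter_upwards [nhdsWithin_le_nhds (eventually_closedBall_subset h_nhds), self_mem_nhdsWithin]
    with r hr (hr0 : 0 < r)
  refine ⟨hr.trans inter_subset_left, ?_⟩
  suffices e '' closedBall c r = {y ∈ ball (e c) δ | ‖e.symm y - c‖ ^ 2 ≤ r ^ 2} from
    this ▸ h_convex.convex_le _
  ext y
  constructor
  · rintro ⟨x, hx, rfl⟩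
    refine ⟨(hr hx).2, ?_⟩
    rw [e.left_inv (hr hx).1]
    gcongr
    exact mem_closedBall_iff_norm.1 hx
  · rintro ⟨hy, hy_le⟩
    refine ⟨e.symm y, ?_, e.right_inv (h_target hy)⟩
    exact mem_closedBall_iff_norm.2
      ((pow_le_pow_iff_left₀ (norm_nonneg _) hr0.le two_ne_zero).1 hy_le)

end ConvexImageOfBall

section Topology

variable {X : Type*} [TopologicalSpace X]

theorem exists_locallyFinite_closed_cover_subset [ParacompactSpace X] [NormalSpace X] {ι : Type*}
    {u : ι → Set X} (hu : ∀ i, IsOpen (u i)) (hcover : ⋃ i, u i = univ) :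
    ∃ C : ι → Set X, (∀ i, IsClosed (C i)) ∧ LocallyFinite C ∧ (∀ i, C i ⊆ u i) ∧
      ⋃ i, C i = univ := by
  obtain ⟨w, hw_open, hw_cover, hw_lf, hw_sub⟩ := precise_refinement u hu hcover
  obtain ⟨C, hC_cover, hC_closed, hC_sub⟩ :=
    exists_iUnion_eq_closed_subset hw_open hw_lf.point_finite hw_cover
  exact ⟨C, hC_closed, hw_lf.subset hC_sub, fun i => (hC_sub i).trans (hw_sub i), hC_cover⟩

variable {E : Type*} [NormedAddCommGroup E] [NormedSpace ℝ E]

theorem OpenPartialHomeomorph.convex_image_sInter (e : OpenPartialHomeomorph X E)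
    {S : Set (Set X)} (hS : S.Nonempty) (h : ∀ s ∈ S, s ⊆ e.source ∧ Convex ℝ (e '' s)) :
    Convex ℝ (e '' ⋂₀ S) := by
  rw [sInter_eq_biInter,
    InjOn.image_biInter_eq hS (e.injOn.mono (iUnion₂_subset fun s hs => (h s hs).1))]
  exact convex_iInter₂ fun s hs => (h s hs).2

theorem OpenPartialHomeomorph.contractibleSpace_of_convex_image (e : OpenPartialHomeomorph X E)
    {s : Set X} (hs : s ⊆ e.source) (h_convex : Convex ℝ (e '' s)) (hne : s.Nonempty) :
    ContractibleSpace s :=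
  haveI := h_convex.contractibleSpace (hne.image e)
  (e.homeomorphOfImageSubsetSource hs rfl).contractibleSpace

end Topology

section ChartClosedBall

variable (E : Type*) [PseudoMetricSpace E] {M : Type*} [TopologicalSpace M] [ChartedSpace E M]

def chartClosedBall (q : M) (r : ℝ) : Set M :=
  (chartAt E q).symm '' closedBall (chartAt E q q) r

theorem eventually_chartClosedBall_subset (q : M) {U : Set M} (hU : U ∈ 𝓝 q) :
    ∀ᶠ r in 𝓝[>] (0 : ℝ), chartClosedBall E q r ⊆ U := by
  have h : (chartAt E q).symm ⁻¹' U ∈ 𝓝 (chartAt E q q) :=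
    (chartAt E q).continuousAt_symm (mem_chart_target E q)
      (by rwa [(chartAt E q).left_inv (mem_chart_source E q)])
  filter_upwards [nhdsWithin_le_nhds (eventually_closedBall_subset h)] with r hr
  exact image_subset_iff.2 hr

theorem eventually_isClosed_chartClosedBall [T2Space M] [ProperSpace E] (q : M) :
    ∀ᶠ r in 𝓝[>] (0 : ℝ), IsClosed (chartClosedBall E q r) ∧ chartClosedBall E q r ∈ 𝓝 q := by
  filter_upwards [nhdsWithin_le_nhds (eventually_closedBall_subset
    ((chartAt E q).open_target.mem_nhds (mem_chart_target E q))), self_mem_nhdsWithin]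
    with r hr (hr0 : 0 < r)
  refine ⟨((isCompact_closedBall _ r).image_of_continuousOn
    ((chartAt E q).continuousOn_symm.mono hr)).isClosed, ?_⟩
  rw [← (chartAt E q).symm_map_nhds_eq (mem_chart_source E q)]
  exact image_mem_map (closedBall_mem_nhds _ hr0)

end ChartClosedBall

section Manifold

variable {E : Type*} [NormedAddCommGroup E] [InnerProductSpace ℝ E]
  {M : Type*} [TopologicalSpace M] [ChartedSpace E M] [IsManifold 𝓘(ℝ, E) 2 M]

theorem eventually_chartClosedBall_subset_source_convex {q i : M}
    (hq : q ∈ (chartAt E i).source) :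
    ∀ᶠ r in 𝓝[>] (0 : ℝ), chartClosedBall E q r ⊆ (chartAt E i).source ∧
      Convex ℝ (chartAt E i '' chartClosedBall E q r) := by
  have hτ := HasGroupoid.compatible (G := contDiffGroupoid 2 𝓘(ℝ, E))
    (chart_mem_atlas E q) (chart_mem_atlas E i)
  rw [contDiffGroupoid, mem_groupoid_of_pregroupoid] at hτ
  simp only [contDiffPregroupoid, modelWithCornersSelf_coe, modelWithCornersSelf_coe_symm,
    range_id, preimage_id, inter_univ, CompTriple.comp_eq] at hτ
  have hc : chartAt E q q ∈ ((chartAt E q).symm ≫ₕ chartAt E i).source := by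
    simpa [(chartAt E q).left_inv (mem_chart_source E q)] using hq
  filter_upwards [((chartAt E q).symm ≫ₕ chartAt E i).eventually_convex_image_closedBall
    hτ.1 hτ.2 hc] with r ⟨hr_source, hr_convex⟩
  refine ⟨image_subset_iff.2 fun x hx => (hr_source hx).2, ?_⟩
  rwa [chartClosedBall, ← image_comp]

theorem exists_closed_mem_nhds_convex_in_charts [ProperSpace E] [T2Space M] {C : M → Set M}
    (hC : LocallyFinite C) (hC_closed : ∀ i, IsClosed (C i))
    (hC_sub : ∀ i, C i ⊆ (chartAt E i).source) (q : M) :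
    ∃ B, IsClosed B ∧ B ∈ 𝓝 q ∧
      ∀ i, (B ∩ C i).Nonempty → B ⊆ (chartAt E i).source ∧ Convex ℝ (chartAt E i '' B) := by
  obtain ⟨Ω, hΩ, h_fin⟩ := hC q
  have h_near : ∀ i ∈ {i | (C i ∩ Ω).Nonempty}, ∀ᶠ r in 𝓝[>] (0 : ℝ),
      (chartClosedBall E q r ∩ C i).Nonempty →
        chartClosedBall E q r ⊆ (chartAt E i).source ∧
          Convex ℝ (chartAt E i '' chartClosedBall E q r) := by
    intro i _
    by_cases hq : q ∈ (chartAt E i).source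
    · exact (eventually_chartClosedBall_subset_source_convex hq).mono fun r hr _ => hr
    · have h_compl : (C i)ᶜ ∈ 𝓝 q :=
        (hC_closed i).isOpen_compl.mem_nhds fun hqC => hq (hC_sub i hqC)
      filter_upwards [eventually_chartClosedBall_subset E q h_compl] with r hr ⟨x, hxB, hxC⟩
      exact absurd hxC (hr hxB)
  obtain ⟨r, h_convex, h_sub, h_closed, h_nhds⟩ := ((eventually_all_finite h_fin).2 h_near).and
    ((eventually_chartClosedBall_subset E q hΩ).and
      (eventually_isClosed_chartClosedBall E q)) |>.exists
  refine ⟨_, h_closed, h_nhds, fun i hi => h_convex i ?_ hi⟩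
  obtain ⟨x, hxB, hxC⟩ := hi
  exact ⟨x, hxC, h_sub hxB⟩

end Manifold

/-- **Existence of a good closed cover** (Proposition `prop:strAcycl` of the paper):
every second-countable Hausdorff finite-dimensional smooth real manifold without
boundary admits a family `𝒰` of closed subsets whose interiors cover the manifold and
such that any nonempty finite intersection of members of `𝒰` is empty or contractible
(in particular, empty or acyclic); that is, it has a good closed cover. -/
theorem exists_good_closed_cover
    (d : ℕ) (M : Type*) [TopologicalSpace M] [T2Space M]
    [SecondCountableTopology M]
    [ChartedSpace (EuclideanSpace ℝ (Fin d)) M]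
    [IsManifold (𝓡 d) (⊤ : ℕ∞) M] :
    ∃ 𝒰 : Set (Set M),
      (∀ U ∈ 𝒰, IsClosed U) ∧
      (⋃ U ∈ 𝒰, interior U = Set.univ) ∧
      ∀ 𝒱 ⊆ 𝒰, 𝒱.Finite → 𝒱.Nonempty →
        (⋂₀ 𝒱 = (∅ : Set M)) ∨ ContractibleSpace (⋂₀ 𝒱 : Set M) := by
  have := ChartedSpace.locallyCompactSpace (EuclideanSpace ℝ (Fin d)) M
  obtain ⟨C, hC_closed, hC_lf, hC_sub, hC_cover⟩ := exists_locallyFinite_closed_cover_subset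
    (fun i : M => (chartAt (EuclideanSpace ℝ (Fin d)) i).open_source)
    (iUnion_eq_univ_iff.2 fun x => ⟨x, mem_chart_source _ x⟩)
  choose B hB_closed hB_nhds hB_convex using
    exists_closed_mem_nhds_convex_in_charts hC_lf hC_closed hC_sub
  refine ⟨range B, forall_mem_range.2 hB_closed,
    iUnion₂_eq_univ_iff.2 fun x =>
      ⟨B x, mem_range_self x, mem_interior_iff_mem_nhds.2 (hB_nhds x)⟩,
    fun 𝒱 h𝒱 _ h𝒱_ne => (⋂₀ 𝒱).eq_empty_or_nonempty.imp_right fun ⟨x, hx⟩ => ?_⟩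
  obtain ⟨i, hi⟩ := iUnion_eq_univ_iff.1 hC_cover x
  set e := chartAt (EuclideanSpace ℝ (Fin d)) i
  have h_chart : ∀ V ∈ 𝒱, V ⊆ e.source ∧ Convex ℝ (e '' V) := by
    intro V hV
    obtain ⟨q, rfl⟩ := h𝒱 hV
    exact hB_convex q i ⟨x, hx _ hV, hi⟩
  obtain ⟨V₀, hV₀⟩ := h𝒱_ne
  exact e.contractibleSpace_of_convex_image ((sInter_subset_of_mem hV₀).trans (h_chart V₀ hV₀).1)
    (e.convex_image_sInter ⟨V₀, hV₀⟩ h_chart) ⟨x, hx⟩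
end
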